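/- The module $\Omega(\lambda, \alpha, \beta, \gamma)$ over the affine-Virasoro algebra of type $A_1$ is irreducible (simple) for all $\lambda, \alpha \in \mathbb{C}^*$ and $\beta, \gamma \in \mathbb{C}$. -/
import Mathlib


open MvPolynomial

/-- `ℂ[s,t]`, with `s = X 0` and `t = X 1`. -/
noncomputable abbrev P2 : Type := MvPolynomial (Fin 2) ℂ

/-- Substitution `g(s,t) ↦ g(s - i, t + a)`. -/
noncomputable def subST (i : ℤ) (a : ℂ) : P2 →ₐ[ℂ] P2 :=
  aeval ![X 0 - C (i : ℂ), X 1 + C a]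

/-- Action of `e_i` on `Ω(λ,α,β,γ)`. -/
noncomputable def omE (lam alp : ℂ) (i : ℤ) (g : P2) : P2 :=
  (lam ^ i * alp) • subST i (-2) g

/-- Action of `f_i` on `Ω(λ,α,β,γ)`. -/
noncomputable def omF (lam alp bet : ℂ) (i : ℤ) (g : P2) : P2 :=
  (-(lam ^ i / alp)) • ((C (1/2 : ℂ) * X 1 - C bet) * (C (1/2 : ℂ) * X 1 + C bet + 1) *
    subST i 2 g)

/-- Action of `h_i` on `Ω(λ,α,β,γ)`. -/
noncomputable def omH (lam : ℂ) (i : ℤ) (g : P2) : P2 :=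
  lam ^ i • (X 1 * subST i 0 g)

/-- Action of `d_i` on `Ω(λ,α,β,γ)`. -/
noncomputable def omD (lam gam : ℂ) (i : ℤ) (g : P2) : P2 :=
  lam ^ i • ((X 0 + C ((i : ℂ) * gam)) * subST i 0 g)

/-! ### Auxiliary material -/

/-- Taking a nontrivial Taylor shift and subtracting gives a nonzero polynomial of
strictly smaller degree (over a characteristic-zero domain). -/
lemma taylor_step {A : Type*} [CommRing A] [IsDomain A] [CharZero A] (r : A) (hr : r ≠ 0)
    (p : Polynomial A) (hp : 0 < p.natDegree) :
    Polynomial.taylor r p - p ≠ 0 ∧ (Polynomial.taylor r p - p).natDegree < p.natDegree := by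
  have hp0 : p ≠ 0 := fun h => by simp [h] at hp
  constructor
  · intro h
    have hfix : Polynomial.taylor r p = p := by rwa [sub_eq_zero] at h
    have hiter : ∀ n : ℕ, Polynomial.taylor ((n : A) * r) p = p := by
      intro n
      induction n with
      | zero => simp [Polynomial.taylor_zero]
      | succ n ih =>
        have : ((n + 1 : ℕ) : A) * r = r + (n : A) * r := by push_cast; ring
        rw [this, ← Polynomial.taylor_taylor, ih, hfix]
    have heval : ∀ n : ℕ, p.eval ((n : A) * r) = p.eval 0 := by
      intro n
      have := congrArg (Polynomial.eval 0) (hiter n)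
      rwa [Polynomial.taylor_eval, zero_add] at this
    have hq : p - Polynomial.C (p.eval 0) = 0 := by
      apply Polynomial.eq_zero_of_infinite_isRoot
      apply Set.infinite_of_injective_forall_mem
        (f := fun n : ℕ => (n : A) * r)
      · intro n m hnm
        have : (n : A) = m := mul_right_cancel₀ hr hnm
        exact_mod_cast this
      · intro n
        simp [Polynomial.IsRoot, heval n]
    have : p = Polynomial.C (p.eval 0) := sub_eq_zero.mp hq
    rw [this] at hp
    simp at hp
  · have ht0 : Polynomial.taylor r p ≠ 0 :=
      fun h => hp0 (Polynomial.taylor_injective r (by simpa using h))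
    have h1 : (Polynomial.taylor r p).natDegree = p.natDegree := Polynomial.natDegree_taylor p r
    have hd : (Polynomial.taylor r p).degree = p.degree := by
      rw [Polynomial.degree_eq_natDegree ht0, Polynomial.degree_eq_natDegree hp0, h1]
    have hlc : (Polynomial.taylor r p).leadingCoeff = p.leadingCoeff := by
      rw [Polynomial.taylor_apply, Polynomial.leadingCoeff_comp (by simp)]
      simp
    have hlt := Polynomial.degree_sub_lt hd ht0 hlc
    rcases eq_or_ne (Polynomial.taylor r p - p) 0 with h | h
    · rw [h]; simpa using hp
    · exact Polynomial.natDegree_lt_natDegree h (hd ▸ hlt)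

/-- `ℂ[t]`, the one-variable coefficient ring. -/
noncomputable abbrev A1 : Type := MvPolynomial (Fin 1) ℂ

/-- `ℂ[s,t] ≅ ℂ[t][s]`, with `s` the outer polynomial variable. -/
noncomputable def F2 : P2 ≃ₐ[ℂ] Polynomial A1 := MvPolynomial.finSuccEquiv ℂ 1

/-- Embedding `ℂ[u] → ℂ[s,t]`, `u ↦ t`. -/
noncomputable def embT : Polynomial ℂ →ₐ[ℂ] P2 := Polynomial.aeval (X 1)

/-- `A1 ≅ ℂ[u]`. -/
noncomputable def e1 : A1 ≃ₐ[ℂ] Polynomial ℂ :=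
  (MvPolynomial.renameEquiv ℂ (Equiv.equivPUnit.{1,1} (Fin 1))).trans (MvPolynomial.pUnitAlgEquiv ℂ)

lemma subST_zero (g : P2) : subST 0 0 g = g := by
  have : subST 0 0 = AlgHom.id ℂ P2 := by
    apply MvPolynomial.algHom_ext
    intro i
    fin_cases i <;> simp [subST]
  rw [this]; rfl

lemma subST_X0 (i : ℤ) (a : ℂ) : subST i a (X 0) = X 0 - C (i : ℂ) := by simp [subST]
lemma subST_X1 (i : ℤ) (a : ℂ) : subST i a (X 1) = X 1 + C a := by simp [subST]

lemma F2_X0 : F2 (X 0) = Polynomial.X := MvPolynomial.finSuccEquiv_X_zero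
lemma F2_X1 : F2 (X 1) = Polynomial.C (X 0) := by
  have : (1 : Fin 2) = (0 : Fin 1).succ := rfl
  rw [F2, this]
  exact MvPolynomial.finSuccEquiv_X_succ

lemma embT_comm (q : Polynomial ℂ) :
    subST 0 (-2) (embT q) = embT (Polynomial.taylor (-2) q) := by
  have h : (subST 0 (-2)).comp embT =
      embT.comp (Polynomial.aeval (Polynomial.X + Polynomial.C (-2 : ℂ))) := by
    apply Polynomial.algHom_ext
    simp [embT, subST]
  have := AlgHom.congr_fun h q
  simpa [Polynomial.taylor_apply, Polynomial.comp_eq_aeval] using this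

lemma F2_comm (g : P2) :
    F2 (subST 1 0 g) = Polynomial.taylor (-1 : A1) (F2 g) := by
  have h : (F2.toAlgHom.comp (subST 1 0) : P2 →ₐ[ℂ] Polynomial A1) =
      ((Polynomial.aeval (Polynomial.X + Polynomial.C (-1 : A1)) :
        Polynomial A1 →ₐ[A1] Polynomial A1).restrictScalars ℂ).comp F2.toAlgHom := by
    apply MvPolynomial.algHom_ext
    intro i
    fin_cases i
    · show F2 (subST 1 0 (X 0)) = Polynomial.aeval _ (F2 (X 0))
      rw [subST_X0, map_sub, F2_X0]
      simp [sub_eq_add_neg]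
    · show F2 (subST 1 0 (X 1)) = Polynomial.aeval _ (F2 (X 1))
      rw [subST_X1, map_add, F2_X1]
      simp
  have := AlgHom.congr_fun h g
  simpa [Polynomial.taylor_apply, Polynomial.comp_eq_aeval] using this

lemma F2_symm_C (a : A1) : F2.symm (Polynomial.C a) = embT (e1 a) := by
  have h : (F2.symm.toAlgHom.comp (Polynomial.CAlgHom (R := ℂ) (A := A1)) : A1 →ₐ[ℂ] P2) =
      embT.comp e1.toAlgHom := by
    apply MvPolynomial.algHom_ext
    intro i
    fin_cases i
    · show F2.symm (Polynomial.C (X 0)) = embT (e1 (X 0))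
      have h1 : e1 (X 0) = Polynomial.X := by simp [e1]
      have h2 : F2.symm (Polynomial.C (X 0)) = X 1 := by
        rw [← F2_X1]; exact F2.symm_apply_apply _
      rw [h1, h2]; simp [embT]
  exact AlgHom.congr_fun h a

/-- Descent in the `t`-variable: from a nonzero polynomial in `t` alone lying in `W`,
produce a nonzero constant in `W`. -/
lemma phase2 (W : Submodule ℂ P2) (hW4 : ∀ g ∈ W, subST 0 (-2) g ∈ W) :
    ∀ (n : ℕ) (q : Polynomial ℂ), q.natDegree ≤ n → q ≠ 0 → embT q ∈ W →
      ∃ c : ℂ, c ≠ 0 ∧ MvPolynomial.C c ∈ W := by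
  have base : ∀ q : Polynomial ℂ, q.natDegree = 0 → q ≠ 0 → embT q ∈ W →
      ∃ c : ℂ, c ≠ 0 ∧ MvPolynomial.C c ∈ W := by
    intro q h0 hq hqW
    have hC : q = Polynomial.C (q.coeff 0) := Polynomial.eq_C_of_natDegree_eq_zero h0
    refine ⟨q.coeff 0, fun h => hq (by rw [hC, h, map_zero]), ?_⟩
    rw [hC] at hqW
    simpa [embT, MvPolynomial.algebraMap_eq] using hqW
  intro n
  induction n with
  | zero =>
    intro q hdeg hq hqW
    exact base q (Nat.le_zero.mp hdeg) hq hqW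
  | succ n ih =>
    intro q hdeg hq hqW
    by_cases h0 : q.natDegree = 0
    · exact base q h0 hq hqW
    · have hp : 0 < q.natDegree := Nat.pos_of_ne_zero h0
      obtain ⟨hne, hlt⟩ := taylor_step (-2 : ℂ) (by norm_num) q hp
      have hq'W : embT (Polynomial.taylor (-2) q - q) ∈ W := by
        rw [map_sub]
        exact W.sub_mem (embT_comm q ▸ hW4 _ hqW) hqW
      exact ih (Polynomial.taylor (-2) q - q) (by omega) hne hq'W

/-- Descent in the `s`-variable, followed by `phase2`. -/
lemma phase1 (W : Submodule ℂ P2)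
    (hW2 : ∀ g ∈ W, (X 1 : P2) * g ∈ W)
    (hW3 : ∀ g ∈ W, (X 1 : P2) * subST 1 0 g ∈ W)
    (hW4 : ∀ g ∈ W, subST 0 (-2) g ∈ W) :
    ∀ (n : ℕ) (g : P2), (F2 g).natDegree ≤ n → g ≠ 0 → g ∈ W →
      ∃ c : ℂ, c ≠ 0 ∧ MvPolynomial.C c ∈ W := by
  have base : ∀ g : P2, (F2 g).natDegree = 0 → g ≠ 0 → g ∈ W →
      ∃ c : ℂ, c ≠ 0 ∧ MvPolynomial.C c ∈ W := by
    intro g h0 hg hgW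
    have hC : F2 g = Polynomial.C ((F2 g).coeff 0) := Polynomial.eq_C_of_natDegree_eq_zero h0
    have ha : (F2 g).coeff 0 ≠ 0 := by
      intro h
      apply hg
      have : F2 g = 0 := by rw [hC, h, map_zero]
      simpa using congrArg F2.symm this
    have hgeq : g = embT (e1 ((F2 g).coeff 0)) := by
      rw [← F2_symm_C, ← hC]
      exact (F2.symm_apply_apply g).symm
    refine phase2 W hW4 (e1 ((F2 g).coeff 0)).natDegree _ le_rfl ?_ (hgeq ▸ hgW)
    intro h
    exact ha (by simpa using congrArg e1.symm h)
  intro n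
  induction n with
  | zero =>
    intro g hdeg hg hgW
    exact base g (Nat.le_zero.mp hdeg) hg hgW
  | succ n ih =>
    intro g hdeg hg hgW
    by_cases h0 : (F2 g).natDegree = 0
    · exact base g h0 hg hgW
    · have hp : 0 < (F2 g).natDegree := Nat.pos_of_ne_zero h0
      obtain ⟨hdne, hdlt⟩ := taylor_step (-1 : A1) (by simp) (F2 g) hp
      set d := Polynomial.taylor (-1 : A1) (F2 g) - F2 g with hd
      set g' := (X 1 : P2) * subST 1 0 g - (X 1 : P2) * g with hg'
      have hg'W : g' ∈ W := W.sub_mem (hW3 g hgW) (hW2 g hgW)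
      have hF2g' : F2 g' = Polynomial.C (X 0 : A1) * d := by
        rw [hg', map_sub, map_mul, map_mul, F2_X1, F2_comm, hd]
        ring
      have hg'0 : g' ≠ 0 := by
        intro h
        rw [h, map_zero] at hF2g'
        exact (mul_ne_zero (Polynomial.C_ne_zero.mpr (MvPolynomial.X_ne_zero 0)) hdne)
          hF2g'.symm
      have hdeg' : (F2 g').natDegree ≤ n := by
        rw [hF2g', Polynomial.natDegree_C_mul (MvPolynomial.X_ne_zero 0)]
        omega
      exact ih g' hdeg' hg'0 hg'W

/-- The module `Ω(λ,α,β,γ)` over the affine-Virasoro algebra of type `A₁` is irreducible for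
all `λ, α ∈ ℂ*` and `β, γ ∈ ℂ`: every subspace stable under the action is `⊥` or `⊤`. -/
theorem stmt10 (lam alp : ℂ) (hlam : lam ≠ 0) (halp : alp ≠ 0) (bet gam : ℂ)
    (W : Submodule ℂ P2)
    (hstab : ∀ (i : ℤ), ∀ g ∈ W, omE lam alp i g ∈ W ∧ omF lam alp bet i g ∈ W ∧
      omH lam i g ∈ W ∧ omD lam gam i g ∈ W) :
    W = ⊥ ∨ W = ⊤ := by
  by_cases hbot : W = ⊥
  · exact Or.inl hbot
  right
  obtain ⟨g, hgW, hg0⟩ := Submodule.exists_mem_ne_zero_of_ne_bot hbot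
  have smul_cancel : ∀ (c : ℂ) (v : P2), c ≠ 0 → c • v ∈ W → v ∈ W := by
    intro c v hc h
    have := W.smul_mem c⁻¹ h
    rwa [smul_smul, inv_mul_cancel₀ hc, one_smul] at this
  have hW1 : ∀ g ∈ W, (X 0 : P2) * g ∈ W := by
    intro g hg
    have h := (hstab 0 g hg).2.2.2
    unfold omD at h
    simpa [subST_zero] using h
  have hW2 : ∀ g ∈ W, (X 1 : P2) * g ∈ W := by
    intro g hg
    have h := (hstab 0 g hg).2.2.1
    unfold omH at h
    simpa [subST_zero] using h
  have hW3 : ∀ g ∈ W, (X 1 : P2) * subST 1 0 g ∈ W := by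
    intro g hg
    have h := (hstab 1 g hg).2.2.1
    unfold omH at h
    exact smul_cancel lam _ hlam (by simpa using h)
  have hW4 : ∀ g ∈ W, subST 0 (-2) g ∈ W := by
    intro g hg
    have h := (hstab 0 g hg).1
    unfold omE at h
    exact smul_cancel alp _ halp (by simpa using h)
  obtain ⟨c, hc, hcW⟩ := phase1 W hW2 hW3 hW4 (F2 g).natDegree g le_rfl hg0 hgW
  have h1 : (1 : P2) ∈ W := by
    apply smul_cancel c _ hc
    rwa [MvPolynomial.smul_eq_C_mul, mul_one]
  rw [Submodule.eq_top_iff']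
  intro p
  induction p using MvPolynomial.induction_on with
  | C a =>
    have : (MvPolynomial.C a : P2) = a • (1 : P2) := by
      rw [MvPolynomial.smul_eq_C_mul, mul_one]
    rw [this]
    exact W.smul_mem a h1
  | add p q hp hq => exact W.add_mem hp hq
  | mul_X p i hp =>
    fin_cases i
    · rw [mul_comm]; exact hW1 p hp
    · rw [mul_comm]; exact hW2 p hp
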